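/- arXiv:2305.16508 — 2 statements merged into one kernel-verified Lean document; each statement's English description precedes it below -/
import Mathlib

section
/- For every n ≥ 0 and all x ∈ ℝ, the normalized Hermite polynomial satisfies |h_n(x)| ≤ 2^{n/2} · max(1, |x|^n). -/
open MeasureTheory ProbabilityTheory

/-- The normalized (probabilists') Hermite polynomials, orthonormal w.r.t. N(0,1). -/
noncomputable def hermiteN : ℕ → ℝ → ℝ
  | 0 => fun _ => 1
  | 1 => fun x => x
  | n + 2 => fun x => x / Real.sqrt (n + 2) * hermiteN (n + 1) x
      - Real.sqrt ((n + 1) / (n + 2)) * hermiteN n x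

/-- The standard Gaussian measure on ℝ. -/
noncomputable def gaussMeasure : Measure ℝ := gaussianReal 0 1

/-!
With `M = max 1 |x|` we show `|h_n(x)| ≤ (√2 M)^n`. The recurrence coefficients are at most
`|x|/√2` and `1`, so the induction step needs `(M/√2)(√2 M)^(n+1) + (√2 M)^n ≤ (√2 M)^(n+2)`,
i.e. `M² + 1 ≤ 2M²`, which is exactly where `M ≥ 1` enters.
-/

lemma abs_hermiteN_add_two_le (n : ℕ) (x : ℝ) :
    |hermiteN (n + 2) x| ≤ |x| / √2 * |hermiteN (n + 1) x| + |hermiteN n x| := by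
  have hsqrt : √2 ≤ √((n : ℝ) + 2) := Real.sqrt_le_sqrt (by linarith [n.cast_nonneg (α := ℝ)])
  have hratio : √(((n : ℝ) + 1) / ((n : ℝ) + 2)) ≤ 1 :=
    Real.sqrt_le_one.mpr ((div_le_one (by positivity)).mpr (by linarith))
  calc |hermiteN (n + 2) x|
      ≤ |x| / √((n : ℝ) + 2) * |hermiteN (n + 1) x|
          + √(((n : ℝ) + 1) / ((n : ℝ) + 2)) * |hermiteN n x| := by
        refine (abs_sub _ _).trans_eq ?_
        rw [abs_mul, abs_mul, abs_div, abs_of_nonneg (Real.sqrt_nonneg _),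
          abs_of_nonneg (Real.sqrt_nonneg _)]
    _ ≤ |x| / √2 * |hermiteN (n + 1) x| + |hermiteN n x| :=
        add_le_add (by gcongr) (mul_le_of_le_one_left (abs_nonneg _) hratio)

lemma abs_hermiteN_le_pow {M : ℝ} (hM : 1 ≤ M) {x : ℝ} (hx : |x| ≤ M) (n : ℕ) :
    |hermiteN n x| ≤ (√2 * M) ^ n := by
  induction n using Nat.twoStepInduction with
  | zero => simp [hermiteN]
  | one =>
    have : M ≤ √2 * M := le_mul_of_one_le_left (by linarith) (Real.one_le_sqrt.mpr one_le_two)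
    simpa [hermiteN] using hx.trans this
  | more n ih ih₁ =>
    have hM₀ : 0 ≤ M := by linarith
    calc |hermiteN (n + 2) x|
        ≤ |x| / √2 * |hermiteN (n + 1) x| + |hermiteN n x| := abs_hermiteN_add_two_le n x
      _ ≤ M / √2 * (√2 * M) ^ (n + 1) + (√2 * M) ^ n := by gcongr
      _ = (√2 * M) ^ n * (M ^ 2 + 1) := by
        field_simp
        ring
      _ ≤ (√2 * M) ^ n * (√2 * M) ^ 2 := by
        gcongr
        rw [mul_pow, Real.sq_sqrt zero_le_two]
        nlinarith
      _ = (√2 * M) ^ (n + 2) := by rw [pow_add]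

lemma two_rpow_natCast_div_two (n : ℕ) : (2 : ℝ) ^ ((n : ℝ) / 2) = √2 ^ n := by
  rw [Real.sqrt_eq_rpow, ← Real.rpow_natCast, ← Real.rpow_mul zero_le_two]
  ring_nf

lemma max_one_pow {R : Type*} [Semiring R] [LinearOrder R] [IsStrictOrderedRing R]
    {a : R} (ha : 0 ≤ a) (n : ℕ) : max 1 a ^ n = max 1 (a ^ n) := by
  rcases le_total 1 a with h | h
  · rw [max_eq_right h, max_eq_right (one_le_pow₀ h)]
  · rw [max_eq_left h, one_pow, max_eq_left (pow_le_one₀ ha h)]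

/-- Pointwise bound on normalized Hermite polynomials. -/
theorem hermite_bound (n : ℕ) (x : ℝ) :
    |hermiteN n x| ≤ (2 : ℝ) ^ ((n : ℝ) / 2) * max 1 (|x| ^ n) := by
  calc |hermiteN n x|
      ≤ (√2 * max 1 |x|) ^ n := abs_hermiteN_le_pow (le_max_left _ _) (le_max_right _ _) n
    _ = (2 : ℝ) ^ ((n : ℝ) / 2) * max 1 (|x| ^ n) := by
      rw [mul_pow, two_rpow_natCast_div_two, max_one_pow (abs_nonneg x)]
end

section
/- Let (X,Y) be a centered bivariate Gaussian with unit variances and correlation ρ. Then E[h_i(X) h_j(Y)] = δ_{ij} ρ^i for all i, j ≥ 0, where h_i are the normalized Hermite polynomials. -/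
/-!
Write `hₙ = Heₙ / √n!`, where `Heₙ` are the monic Hermite polynomials of Mathlib, which satisfy
`Heₙ₊₁ = X Heₙ - Heₙ'` and `Heₙ₊₁' = (n + 1) Heₙ`. Gaussian integration by parts,
`E[Z P(Z)] = E[P'(Z)]` for a standard Gaussian `Z` and a polynomial `P`, gives both the
orthogonality `E[Heᵢ(Z) Heⱼ(Z)] = δᵢⱼ i!` and, for `ρ² + s² = 1`, the Mehler-type identity
`E[Heₙ(ρx + sZ)] = ρⁿ Heₙ(x)`. Integrating first in the second coordinate (Fubini) turns
`E[hᵢ(X) hⱼ(Y)]` into `ρʲ E[hᵢ(X) hⱼ(X)] = δᵢⱼ ρⁱ`.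
-/

open MeasureTheory ProbabilityTheory

open Polynomial
open scoped NNReal Nat

lemma hasDerivAt_gaussianPDFReal (μ : ℝ) (v : ℝ≥0) (x : ℝ) :
    HasDerivAt (gaussianPDFReal μ v) (-((x - μ) / v) * gaussianPDFReal μ v x) x := by
  have h := (((hasDerivAt_id x).sub_const μ).pow 2).neg.div_const (2 * (v : ℝ)) |>.exp.const_mul
    (Real.sqrt (2 * Real.pi * v))⁻¹
  rw [gaussianPDFReal_def]
  refine h.congr_deriv ?_
  simp only [id, Pi.neg_apply, Pi.pow_apply, Nat.cast_ofNat, mul_one, neg_div,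
    mul_div_mul_left _ _ two_ne_zero (G₀ := ℝ)]
  ring

lemma integrable_eval_gaussianReal (μ : ℝ) (v : ℝ≥0) (P : ℝ[X]) :
    Integrable (fun x ↦ P.eval x) (gaussianReal μ v) := by
  simp_rw [eval_eq_sum_range]
  refine integrable_finsetSum _ fun k _ ↦ Integrable.const_mul ?_ _
  refine (integrable_norm_iff (by fun_prop)).1 ?_
  simpa using (memLp_id_gaussianReal (μ := μ) (v := v) k).integrable_norm_pow'

lemma memLp_eval_gaussianReal (μ : ℝ) (v : ℝ≥0) (P : ℝ[X]) :
    MemLp (fun x ↦ P.eval x) 2 (gaussianReal μ v) := by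
  rw [memLp_two_iff_integrable_sq (by fun_prop)]
  exact (integrable_eval_gaussianReal μ v (P ^ 2)).congr (ae_of_all _ fun x ↦ eval_pow 2)

lemma integrable_gaussianPDFReal_mul_eval (μ : ℝ) {v : ℝ≥0} (hv : v ≠ 0) (P : ℝ[X]) :
    Integrable (fun x ↦ gaussianPDFReal μ v x * P.eval x) := by
  have h := integrable_eval_gaussianReal μ v P
  rw [gaussianReal_of_var_ne_zero _ hv, integrable_withDensity_iff_integrable_smul'
    (measurable_gaussianPDF μ v) (ae_of_all _ fun _ ↦ gaussianPDF_lt_top)] at h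
  simpa [toReal_gaussianPDF] using h

theorem integral_sub_mul_eval_gaussianReal (μ : ℝ) (v : ℝ≥0) (P : ℝ[X]) :
    ∫ x, (x - μ) * P.eval x ∂gaussianReal μ v
      = v * ∫ x, P.derivative.eval x ∂gaussianReal μ v := by
  rcases eq_or_ne v 0 with rfl | hv
  · simp [gaussianReal_zero_var]
  have ibp := integral_mul_deriv_eq_deriv_mul_of_integrable (u := fun x ↦ P.eval x)
    (u' := fun x ↦ P.derivative.eval x) (v := gaussianPDFReal μ v)
    (fun x _ ↦ P.hasDerivAt x) (fun x _ ↦ hasDerivAt_gaussianPDFReal μ v x) ?_ ?_ ?_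
  · simp only [integral_gaussianReal_eq_integral_smul hv, smul_eq_mul]
    have hv' : (v : ℝ) ≠ 0 := by exact_mod_cast hv
    calc ∫ x, gaussianPDFReal μ v x * ((x - μ) * P.eval x)
        = -v * ∫ x, P.eval x * (-((x - μ) / v) * gaussianPDFReal μ v x) := by
          rw [← integral_const_mul]
          congr 1 with x
          field_simp
      _ = v * ∫ x, gaussianPDFReal μ v x * P.derivative.eval x := by
          rw [ibp]
          simp_rw [mul_comm (gaussianPDFReal μ v _)]
          ring
  · convert (integrable_gaussianPDFReal_mul_eval μ hv (P * (X - C μ))).const_mul (-(v : ℝ)⁻¹)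
      using 2
    simp only [Pi.mul_apply, eval_mul, eval_sub, eval_X, eval_C]
    ring
  · convert integrable_gaussianPDFReal_mul_eval μ hv P.derivative using 2
    exact mul_comm _ _
  · convert integrable_gaussianPDFReal_mul_eval μ hv P using 2
    exact mul_comm _ _

lemma measurePreserving_mul_add_mul_gaussianReal (v : ℝ≥0) {a b : ℝ} (h : a ^ 2 + b ^ 2 = 1) :
    MeasurePreserving (fun p : ℝ × ℝ ↦ a * p.1 + b * p.2)
      ((gaussianReal 0 v).prod (gaussianReal 0 v)) (gaussianReal 0 v) := by
  refine ⟨by fun_prop, ?_⟩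
  have hcomp : (fun p : ℝ × ℝ ↦ a * p.1 + b * p.2)
      = (fun p : ℝ × ℝ ↦ p.1 + p.2) ∘ Prod.map (a * ·) (b * ·) := rfl
  rw [hcomp, ← Measure.map_map (by fun_prop) (by fun_prop),
    ← Measure.map_prod_map _ _ (by fun_prop) (by fun_prop), gaussianReal_map_const_mul,
    gaussianReal_map_const_mul, ← Measure.conv, gaussianReal_conv_gaussianReal]
  congr 1
  · simp
  · ext; simp [← add_mul, h]

-- Bundled as a linear map so that the integral computations below are polynomial algebra.
noncomputable def gaussianExpect : ℝ[X] →ₗ[ℝ] ℝ where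
  toFun P := ∫ x, P.eval x ∂gaussianReal 0 1
  map_add' P Q := by
    simpa only [eval_add] using integral_add (integrable_eval_gaussianReal 0 1 P)
      (integrable_eval_gaussianReal 0 1 Q)
  map_smul' c P := by simp [integral_const_mul]

lemma gaussianExpect_apply (P : ℝ[X]) :
    gaussianExpect P = ∫ x, P.eval x ∂gaussianReal 0 1 := rfl

lemma gaussianExpect_C_mul (c : ℝ) (P : ℝ[X]) :
    gaussianExpect (C c * P) = c * gaussianExpect P := by
  rw [C_mul', map_smul, smul_eq_mul]

lemma gaussianExpect_one : gaussianExpect 1 = 1 := by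
  simp [gaussianExpect_apply]

lemma gaussianExpect_X_mul (P : ℝ[X]) :
    gaussianExpect (X * P) = gaussianExpect (derivative P) := by
  simpa [gaussianExpect_apply] using integral_sub_mul_eval_gaussianReal 0 1 P

lemma gaussianExpect_C (c : ℝ) : gaussianExpect (C c) = c := by
  rw [← mul_one (C c), gaussianExpect_C_mul, gaussianExpect_one, mul_one]

lemma gaussianExpect_X : gaussianExpect X = 0 := by
  simpa using gaussianExpect_X_mul 1

theorem Polynomial.derivative_hermite_succ (n : ℕ) :
    derivative (hermite (n + 1)) = (n + 1 : ℤ[X]) * hermite n := by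
  induction n with
  | zero => simp
  | succ n ih =>
    rw [hermite_succ (n + 1), derivative_sub, derivative_mul, derivative_X, ih, derivative_mul]
    simp only [derivative_add, derivative_natCast, derivative_one, zero_mul, zero_add, one_mul]
    push_cast
    linear_combination -(↑n + 1 : ℤ[X]) * hermite_succ n

theorem Polynomial.hermite_succ_succ (n : ℕ) :
    hermite (n + 2) = X * hermite (n + 1) - (n + 1 : ℤ[X]) * hermite n := by
  rw [hermite_succ (n + 1), derivative_hermite_succ]

noncomputable def realHermite (n : ℕ) : ℝ[X] := (hermite n).map (Int.castRingHom ℝ)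

@[simp] lemma realHermite_zero : realHermite 0 = 1 := by simp [realHermite]

@[simp] lemma realHermite_one : realHermite 1 = X := by simp [realHermite]

lemma realHermite_succ (n : ℕ) :
    realHermite (n + 1) = X * realHermite n - derivative (realHermite n) := by
  simp [realHermite, derivative_map]

lemma derivative_realHermite_succ (n : ℕ) :
    derivative (realHermite (n + 1)) = C ((n : ℝ) + 1) * realHermite n := by
  unfold realHermite
  rw [derivative_map, derivative_hermite_succ, Polynomial.map_mul]
  simp

lemma realHermite_succ_succ (n : ℕ) :
    realHermite (n + 2) = X * realHermite (n + 1) - C ((n : ℝ) + 1) * realHermite n := by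
  unfold realHermite
  rw [hermite_succ_succ]
  simp

lemma gaussianExpect_realHermite (n : ℕ) :
    gaussianExpect (realHermite n) = if n = 0 then 1 else 0 := by
  cases n with
  | zero => simp [gaussianExpect_one]
  | succ n => simp [realHermite_succ n, gaussianExpect_X_mul]

theorem gaussianExpect_realHermite_mul_realHermite (i j : ℕ) :
    gaussianExpect (realHermite i * realHermite j) = if i = j then (i ! : ℝ) else 0 := by
  induction j generalizing i with
  | zero =>
    rw [realHermite_zero, mul_one, gaussianExpect_realHermite]
    split_ifs with h <;> simp [h]
  | succ j ih =>
    have hstein : gaussianExpect (realHermite i * realHermite (j + 1))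
        = gaussianExpect (derivative (realHermite i) * realHermite j) := by
      rw [realHermite_succ, mul_sub, map_sub, mul_left_comm, gaussianExpect_X_mul,
        derivative_mul, map_add, add_sub_cancel_right]
    rw [hstein]
    cases i with
    | zero => simp
    | succ i =>
      rw [derivative_realHermite_succ, mul_assoc, gaussianExpect_C_mul, ih]
      split_ifs with h <;> simp_all [Nat.factorial_succ]

theorem gaussianExpect_realHermite_comp {ρ s : ℝ} (h : ρ ^ 2 + s ^ 2 = 1) (x : ℝ) :
    ∀ n, gaussianExpect ((realHermite n).comp (C (ρ * x) + C s * X))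
      = ρ ^ n * (realHermite n).eval x
  | 0 => by simp [gaussianExpect_one]
  | 1 => by simp [gaussianExpect_C, gaussianExpect_C_mul, gaussianExpect_X]
  | n + 2 => by
    set L : ℝ[X] := C (ρ * x) + C s * X
    have hderiv : derivative ((realHermite (n + 1)).comp L)
        = C (s * (n + 1)) * (realHermite n).comp L := by
      rw [derivative_comp, derivative_realHermite_succ, mul_comp, C_comp, C_mul, mul_assoc]
      simp [L]
    have hsplit : (realHermite (n + 2)).comp L = C (ρ * x) * (realHermite (n + 1)).comp L
        + C s * (X * (realHermite (n + 1)).comp L) - C ((n : ℝ) + 1) * (realHermite n).comp L := by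
      rw [realHermite_succ_succ, sub_comp, mul_comp, mul_comp, X_comp, C_comp]
      ring
    rw [hsplit, map_sub, map_add, gaussianExpect_C_mul, gaussianExpect_C_mul,
      gaussianExpect_C_mul, gaussianExpect_X_mul, hderiv, gaussianExpect_C_mul,
      gaussianExpect_realHermite_comp h x (n + 1), gaussianExpect_realHermite_comp h x n,
      realHermite_succ_succ]
    simp only [eval_sub, eval_mul, eval_X, eval_C]
    linear_combination ((n : ℝ) + 1) * ρ ^ n * (realHermite n).eval x * h

lemma sqrt_factorial_succ (n : ℕ) : √((n + 1)! : ℝ) = √((n : ℝ) + 1) * √(n ! : ℝ) := by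
  rw [Nat.factorial_succ, Nat.cast_mul, Real.sqrt_mul (by positivity)]
  push_cast
  ring

lemma hermiteN_eq_eval_realHermite_div :
    ∀ (n : ℕ) (x : ℝ), hermiteN n x = (realHermite n).eval x / √(n ! : ℝ)
  | 0, x => by simp [hermiteN]
  | 1, x => by simp [hermiteN]
  | n + 2, x => by
    dsimp only [hermiteN]
    rw [hermiteN_eq_eval_realHermite_div (n + 1), hermiteN_eq_eval_realHermite_div n,
      realHermite_succ_succ, sqrt_factorial_succ (n + 1), sqrt_factorial_succ n,
      Real.sqrt_div (by positivity)]
    simp only [eval_sub, eval_mul, eval_X, eval_C]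
    have hsq : √((n : ℝ) + 1) ^ 2 = n + 1 := Real.sq_sqrt (by positivity)
    push_cast
    field_simp
    rw [hsq]
    ring_nf

lemma memLp_hermiteN (n : ℕ) : MemLp (hermiteN n) 2 (gaussianReal 0 1) := by
  convert memLp_eval_gaussianReal 0 1 (C (√(n ! : ℝ))⁻¹ * realHermite n) using 1
  ext x
  rw [hermiteN_eq_eval_realHermite_div, eval_mul, eval_C, inv_mul_eq_div]

theorem integral_hermiteN_mul_hermiteN (i j : ℕ) :
    ∫ x, hermiteN i x * hermiteN j x ∂gaussianReal 0 1 = if i = j then 1 else 0 := by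
  have h : ∀ x, hermiteN i x * hermiteN j x
      = (√(i ! : ℝ) * √(j ! : ℝ))⁻¹ * (realHermite i * realHermite j).eval x := by
    intro x
    rw [hermiteN_eq_eval_realHermite_div, hermiteN_eq_eval_realHermite_div, eval_mul]
    field_simp
  simp_rw [h, integral_const_mul, ← gaussianExpect_apply,
    gaussianExpect_realHermite_mul_realHermite]
  split_ifs with hij
  · subst hij
    rw [Real.mul_self_sqrt (by positivity), inv_mul_cancel₀ (by positivity)]
  · rw [mul_zero]

theorem integral_hermiteN_mul_add_mul {ρ s : ℝ} (h : ρ ^ 2 + s ^ 2 = 1) (n : ℕ) (x : ℝ) :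
    ∫ z, hermiteN n (ρ * x + s * z) ∂gaussianReal 0 1 = ρ ^ n * hermiteN n x := by
  simp_rw [hermiteN_eq_eval_realHermite_div, integral_div]
  have := gaussianExpect_realHermite_comp h x n
  rw [gaussianExpect_apply] at this
  simp only [eval_comp, eval_add, eval_mul, eval_C, eval_X] at this
  rw [this, mul_div_assoc]

/-- For a centered bivariate Gaussian (X,Y) with unit variances and correlation ρ,
realized as X = ξ₁, Y = ρξ₁ + √(1-ρ²)ξ₂ with ξ₁, ξ₂ independent standard Gaussians,
E[hᵢ(X) hⱼ(Y)] = δᵢⱼ ρ^i. -/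
theorem hermite_orthogonality (ρ : ℝ) (hρ : ρ ∈ Set.Icc (-1 : ℝ) 1) (i j : ℕ) :
    ∫ p : ℝ × ℝ, hermiteN i p.1 * hermiteN j (ρ * p.1 + Real.sqrt (1 - ρ ^ 2) * p.2)
        ∂(gaussMeasure.prod gaussMeasure)
      = if i = j then ρ ^ i else 0 := by
  unfold gaussMeasure
  set s := √(1 - ρ ^ 2)
  have hs : ρ ^ 2 + s ^ 2 = 1 := by
    rw [Real.sq_sqrt (by nlinarith [hρ.1, hρ.2])]
    ring
  have hint : Integrable (fun p : ℝ × ℝ ↦ hermiteN i p.1 * hermiteN j (ρ * p.1 + s * p.2))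
      ((gaussianReal 0 1).prod (gaussianReal 0 1)) :=
    ((memLp_hermiteN i).comp_measurePreserving measurePreserving_fst).integrable_mul
      ((memLp_hermiteN j).comp_measurePreserving (measurePreserving_mul_add_mul_gaussianReal 1 hs))
  rw [integral_prod _ hint]
  simp_rw [integral_const_mul, integral_hermiteN_mul_add_mul hs, mul_left_comm _ (ρ ^ j),
    integral_const_mul, integral_hermiteN_mul_hermiteN]
  split_ifs with hij
  · rw [hij, mul_one]
  · rw [mul_zero]
end
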